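/- arXiv:1710.09576 — 2 statements merged into one kernel-verified Lean document; each statement's English description precedes it below -/
import Mathlib

section
/- For complex numbers s, p, the pair (s,p) lies in the symmetrized bidisc G₂ if and only if |s| < 2 and for all ω on the unit circle, |(2p - ωs)/(2 - ω̄ s)| < 1. -/
open Complex ComplexConjugate

def G2 : Set (ℂ × ℂ) :=
  {w | ∃ z₁ z₂ : ℂ, ‖z₁‖ < 1 ∧ ‖z₂‖ < 1 ∧ w = (z₁ + z₂, z₁ * z₂)}

/-!
For `‖ω‖ = 1` and `‖s‖ < 2` the denominator `2 - ω̄ s` does not vanish, and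
`|2 - ω̄ s|² - |2p - ω s|² = 4 (1 - |p|² - Re (ω̄ (s - s̄ p)))`; taking the worst `ω`, the
condition on the circle says exactly `|s - s̄ p| < 1 - |p|²`.

This is the classical description of `G₂`: writing `s = z₁ + z₂`, `p = z₁ z₂` (always possible
over `ℂ`), one has `s - s̄ p = z₁ (1 - |z₂|²) + z₂ (1 - |z₁|²)`, and with `a = |z₁|`, `b = |z₂|`
everything reduces to the factorisation
`1 - a²b² - a (1 - b²) - b (1 - a²) = (1 - a)(1 - b)(1 - ab)`.
-/

theorem exists_add_eq_and_mul_eq {K : Type*} [Field K] [IsAlgClosed K] (s p : K) :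
    ∃ z₁ z₂ : K, z₁ + z₂ = s ∧ z₁ * z₂ = p := by
  open Polynomial in
  obtain ⟨z, hz⟩ := IsAlgClosed.exists_root (C 1 * X ^ 2 + C (-s) * X + C p)
    (by rw [degree_quadratic one_ne_zero]; decide)
  refine ⟨z, s - z, add_sub_cancel z s, ?_⟩
  simp only [IsRoot, eval_add, eval_mul, eval_C, eval_pow, eval_X] at hz
  linear_combination -hz

theorem norm_lt_iff_forall_re_conj_mul_lt {u : ℂ} {c : ℝ} :
    ‖u‖ < c ↔ ∀ ω : ℂ, ‖ω‖ = 1 → (conj ω * u).re < c := by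
  refine ⟨fun h ω hω => ?_, fun h => ?_⟩
  · calc (conj ω * u).re ≤ ‖conj ω * u‖ := re_le_norm _
      _ = ‖u‖ := by rw [norm_mul, norm_conj, hω, one_mul]
      _ < c := h
  · set ω := exp (arg u * I)
    have hω : ‖ω‖ = 1 := norm_exp_ofReal_mul_I _
    have hu : conj ω * u = ‖u‖ := by
      conv_lhs => rw [← norm_mul_exp_arg_mul_I u]
      rw [mul_left_comm, conj_mul', hω]
      simp
    simpa [hu] using h ω hω

theorem normSq_two_sub_conj_mul_sub_normSq_two_mul_sub (ω s p : ℂ) :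
    normSq (2 - conj ω * s) - normSq (2 * p - ω * s) =
      4 * (1 - normSq p - (conj ω * (s - conj s * p)).re) := by
  simp only [normSq_apply, mul_re, mul_im, sub_re, sub_im, conj_re, conj_im, re_ofNat, im_ofNat]
  ring

theorem two_sub_conj_mul_ne_zero {ω s : ℂ} (hω : ‖ω‖ = 1) (hs : ‖s‖ < 2) :
    2 - conj ω * s ≠ 0 := by
  intro h
  have : ‖(2 : ℂ)‖ = ‖conj ω * s‖ := by rw [sub_eq_zero.1 h]
  rw [norm_mul, norm_conj, hω, one_mul, Complex.norm_two] at this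
  linarith

theorem norm_div_lt_one_iff_re_conj_mul_lt {ω s p : ℂ} (hω : ‖ω‖ = 1) (hs : ‖s‖ < 2) :
    ‖(2 * p - ω * s) / (2 - conj ω * s)‖ < 1 ↔
      (conj ω * (s - conj s * p)).re < 1 - ‖p‖ ^ 2 := by
  have hden := norm_pos_iff.2 (two_sub_conj_mul_ne_zero hω hs)
  have key := normSq_two_sub_conj_mul_sub_normSq_two_mul_sub ω s p
  simp only [normSq_eq_norm_sq] at key
  rw [norm_div, div_lt_one hden, ← sq_lt_sq₀ (norm_nonneg _) hden.le]
  constructor <;> intro h <;> linarith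

theorem sub_conj_mul_eq (z₁ z₂ : ℂ) :
    (z₁ + z₂) - conj (z₁ + z₂) * (z₁ * z₂) =
      z₁ * ((1 - ‖z₂‖ ^ 2 : ℝ) : ℂ) + z₂ * ((1 - ‖z₁‖ ^ 2 : ℝ) : ℂ) := by
  push_cast
  rw [← conj_mul' z₁, ← conj_mul' z₂, map_add]
  ring

theorem norm_sub_conj_mul_lt {z₁ z₂ : ℂ} (h₁ : ‖z₁‖ < 1) (h₂ : ‖z₂‖ < 1) :
    ‖(z₁ + z₂) - conj (z₁ + z₂) * (z₁ * z₂)‖ < 1 - ‖z₁ * z₂‖ ^ 2 := by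
  have ha := norm_nonneg z₁
  have hb := norm_nonneg z₂
  have hab : ‖z₁‖ * ‖z₂‖ < 1 := by nlinarith
  rw [sub_conj_mul_eq, norm_mul]
  calc _ ≤ ‖z₁‖ * (1 - ‖z₂‖ ^ 2) + ‖z₂‖ * (1 - ‖z₁‖ ^ 2) := by
        refine (norm_add_le _ _).trans_eq ?_
        rw [norm_mul, norm_mul, norm_real, norm_real, Real.norm_of_nonneg (by nlinarith),
          Real.norm_of_nonneg (by nlinarith)]
    _ < 1 - (‖z₁‖ * ‖z₂‖) ^ 2 := by
        nlinarith [mul_pos (mul_pos (sub_pos.2 h₁) (sub_pos.2 h₂)) (sub_pos.2 hab)]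

theorem norm_lt_one_of_norm_sub_conj_mul_lt {z₁ z₂ : ℂ}
    (h : ‖(z₁ + z₂) - conj (z₁ + z₂) * (z₁ * z₂)‖ < 1 - ‖z₁ * z₂‖ ^ 2) : ‖z₁‖ < 1 := by
  rw [sub_conj_mul_eq, norm_mul] at h
  have ha := norm_nonneg z₁
  have hb := norm_nonneg z₂
  have hab : ‖z₁‖ * ‖z₂‖ < 1 := by
    have := (norm_nonneg _).trans_lt h
    nlinarith [mul_nonneg ha hb]
  by_contra! ha1
  have hb1 : ‖z₂‖ < 1 := by nlinarith
  have tri := (norm_sub_le_norm_add _ _).trans_lt h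
  rw [norm_mul, norm_mul, norm_real, norm_real, Real.norm_of_nonneg (by nlinarith),
    Real.norm_of_nonpos (by nlinarith)] at tri
  nlinarith [mul_nonneg (mul_nonneg (sub_nonneg.2 ha1) (sub_pos.2 hb1).le) (sub_pos.2 hab).le]

theorem mem_G2_iff {s p : ℂ} : (s, p) ∈ G2 ↔ ‖s - conj s * p‖ < 1 - ‖p‖ ^ 2 := by
  constructor
  · rintro ⟨z₁, z₂, h₁, h₂, hsp⟩
    obtain ⟨rfl, rfl⟩ := Prod.ext_iff.1 hsp
    exact norm_sub_conj_mul_lt h₁ h₂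
  · intro h
    obtain ⟨z₁, z₂, rfl, rfl⟩ := exists_add_eq_and_mul_eq s p
    refine ⟨z₁, z₂, norm_lt_one_of_norm_sub_conj_mul_lt h, ?_, rfl⟩
    rw [add_comm z₁, mul_comm z₁] at h
    exact norm_lt_one_of_norm_sub_conj_mul_lt h

theorem norm_fst_lt_two_of_mem_G2 {w : ℂ × ℂ} (hw : w ∈ G2) : ‖w.1‖ < 2 := by
  obtain ⟨z₁, z₂, h₁, h₂, rfl⟩ := hw
  linarith [norm_add_le z₁ z₂]

theorem stmt_2 (s p : ℂ) :
    (s, p) ∈ G2 ↔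
      ‖s‖ < 2 ∧
        ∀ ω : ℂ, ‖ω‖ = 1 →
          ‖(2 * p - ω * s) / (2 - conj ω * s)‖ < 1 := by
  refine ⟨fun h => ⟨norm_fst_lt_two_of_mem_G2 h, fun ω hω => ?_⟩, fun ⟨hs, h⟩ => ?_⟩
  · rw [norm_div_lt_one_iff_re_conj_mul_lt hω (norm_fst_lt_two_of_mem_G2 h)]
    exact norm_lt_iff_forall_re_conj_mul_lt.1 (mem_G2_iff.1 h) ω hω
  · refine mem_G2_iff.2 (norm_lt_iff_forall_re_conj_mul_lt.2 fun ω hω => ?_)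
    exact (norm_div_lt_one_iff_re_conj_mul_lt hω hs).1 (h ω hω)
end

section
/- Let f = (f₁,f₂) : G₂ → G₂ be holomorphic, let θ ∈ [0,2π), and z₀ = (e^{iθ}, 0) ∈ ∂G₂. Suppose f extends holomorphically to a neighborhood of z₀ and f(z₀) = z₀. Then λ := ∂f₁/∂s(z₀) - e^{-iθ}∂f₂/∂s(z₀) is real and satisfies λ ≥ (1/2)·|1 - ḡ(0)|²/(1 - |g(0)|²) > 0, where g(0) = e^{-2iθ}(e^{iθ}f₁(0,0) - 2f₂(0,0))/(2 - e^{-iθ}f₁(0,0)). -/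
/-!
For `‖ω‖ = 1` the rational function `(ω s - 2ω² p) / (2 - ω s)` maps `G₂` into the unit disc;
with `ω = e^{-iθ}` it sends `z₀` to `1`. Composing `f` with the complex line `ξ ↦ ξ • z₀`,
which stays in `G₂` for `|ξ| < 1`, gives a self-map `g` of the disc with `g 1 = 1` and
`g' 1 = 2λ`. The boundary Schwarz lemma for `g` finishes: `Re g(e^{it}) ≤ 1 = Re g(1)` forces
`g' 1` to be real, and after moving `g 0` to the origin by a Blaschke factor, Schwarz's lemma
`|φ r| ≤ r` along the radius gives `g' 1 ≥ |1 - g 0|² / (1 - |g 0|²)`.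
-/

open Complex ComplexConjugate

open Metric Set Filter Topology

theorem HasDerivWithinAt.nonneg_of_isMaxOn_Icc {ψ : ℝ → ℝ} {a b D : ℝ} (hab : a < b)
    (hψ : HasDerivWithinAt ψ D (Icc a b) b) (hmax : IsMaxOn ψ (Icc a b) b) : 0 ≤ D := by
  have hcone : a - b ∈ posTangentConeAt (Icc a b) b :=
    sub_mem_posTangentConeAt_of_segment_subset (by rw [segment_symm, segment_eq_Icc hab.le])
  have := hmax.localize.hasFDerivWithinAt_nonpos hψ hcone
  simp only [ContinuousLinearMap.toSpanSingleton_apply, smul_eq_mul] at this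
  nlinarith

theorem norm_le_one_of_mapsTo_ball_of_continuousAt {g : ℂ → ℂ} {z : ℂ}
    (hmaps : MapsTo g (ball 0 1) (ball 0 1)) (hg : ContinuousAt g z) (hz : ‖z‖ ≤ 1) :
    ‖g z‖ ≤ 1 := by
  have hclosure := hg.continuousWithinAt.mem_closure
    (by rwa [closure_ball 0 one_ne_zero, mem_closedBall_zero_iff]) hmaps
  rwa [closure_ball 0 one_ne_zero, mem_closedBall_zero_iff] at hclosure

theorem im_eq_zero_of_hasDerivAt_of_mapsTo_ball {g : ℂ → ℂ} {c : ℂ}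
    (hmaps : MapsTo g (ball 0 1) (ball 0 1)) (hcont : ∀ᶠ z in 𝓝 1, ContinuousAt g z)
    (hg : HasDerivAt g c 1) (hg₁ : g 1 = 1) : c.im = 0 := by
  have hcirc : HasDerivAt (fun t : ℂ => exp (t * I)) I 0 := by
    simpa using ((hasDerivAt_id (0 : ℂ)).mul_const I).cexp
  have hgcirc : HasDerivAt (fun t : ℂ => g (exp (t * I))) (c * I) 0 :=
    (show HasDerivAt g c (exp ((0 : ℂ) * I)) by simpa using hg).comp 0 hcirc
  have hmax : IsLocalMax (fun t : ℝ => (g (exp (t * I))).re) 0 := by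
    have hcirc_tendsto : Tendsto (fun t : ℝ => exp (t * I)) (𝓝 0) (𝓝 1) := by
      simpa using ((continuous_ofReal.mul continuous_const).cexp).tendsto 0
    filter_upwards [hcirc_tendsto.eventually hcont] with t ht
    simpa [hg₁] using (re_le_norm _).trans
      (norm_le_one_of_mapsTo_ball_of_continuousAt hmaps ht (by simp [norm_exp]))
  have hderiv := hmax.hasDerivAt_eq_zero
    (HasDerivAt.real_of_complex (z := 0) (by simpa using hgcirc))
  simpa using hderiv

theorem one_le_re_conj_mul_of_mapsTo_ball {φ : ℂ → ℂ} {d : ℂ}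
    (hd : DifferentiableOn ℂ φ (ball 0 1)) (hmaps : MapsTo φ (ball 0 1) (ball 0 1))
    (h₀ : φ 0 = 0) (h₁ : ‖φ 1‖ = 1) (hφ : HasDerivAt φ d 1) : 1 ≤ (conj (φ 1) * d).re := by
  set ψ : ℝ → ℝ := fun r => (conj (φ 1) * φ r).re - r
  have hψ : HasDerivAt ψ ((conj (φ 1) * d).re - 1) 1 :=
    ((show HasDerivAt φ d ((1 : ℝ) : ℂ) by simpa using hφ).const_mul _).real_of_complex.sub
      (hasDerivAt_id 1)
  have hmax : IsMaxOn ψ (Icc 0 1) 1 := by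
    intro r ⟨hr₀, hr₁⟩
    have hψ1 : ψ 1 = 0 := by simp only [ψ, ofReal_one, conj_mul', h₁]; norm_num
    simp only [mem_ofPred_eq, hψ1]
    rcases hr₁.lt_or_eq with hr₁ | rfl
    · have hschwarz := Complex.norm_le_norm_of_mapsTo_ball hd
        (hmaps.mono_right ball_subset_closedBall) h₀ (z := (r : ℂ))
        (by simpa [abs_of_nonneg hr₀])
      calc (conj (φ 1) * φ r).re - r ≤ ‖conj (φ 1) * φ r‖ - r := by gcongr; exact re_le_norm _
        _ ≤ 0 := by simp [h₁, abs_of_nonneg hr₀] at hschwarz ⊢; linarith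
    · exact hψ1.le
  linarith [hψ.hasDerivWithinAt.nonneg_of_isMaxOn_Icc one_pos hmax]

noncomputable def blaschke (a w : ℂ) : ℂ := (w - a) / (1 - conj a * w)

theorem normSq_one_sub_conj_mul_sub_normSq_sub (a w : ℂ) :
    normSq (1 - conj a * w) - normSq (w - a) = (1 - normSq a) * (1 - normSq w) := by
  simp only [normSq_apply, sub_re, sub_im, mul_re, mul_im, one_re, one_im, conj_re, conj_im]
  ring

theorem one_sub_conj_mul_ne_zero {a w : ℂ} (ha : ‖a‖ < 1) (hw : ‖w‖ ≤ 1) :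
    1 - conj a * w ≠ 0 := by
  have hlt : ‖conj a * w‖ < 1 := by
    rw [norm_mul, norm_conj]; nlinarith [norm_nonneg a, norm_nonneg w]
  intro h
  rw [← sub_eq_zero.mp h, norm_one] at hlt
  exact lt_irrefl _ hlt

theorem norm_blaschke_lt_one {a w : ℂ} (ha : ‖a‖ < 1) (hw : ‖w‖ < 1) : ‖blaschke a w‖ < 1 := by
  rw [blaschke, norm_div, div_lt_one (norm_pos_iff.2 (one_sub_conj_mul_ne_zero ha hw.le)),
    ← sq_lt_sq₀ (norm_nonneg _) (norm_nonneg _), ← normSq_eq_norm_sq, ← normSq_eq_norm_sq]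
  have ha' : normSq a < 1 := by rw [normSq_eq_norm_sq]; nlinarith [norm_nonneg a]
  have hw' : normSq w < 1 := by rw [normSq_eq_norm_sq]; nlinarith [norm_nonneg w]
  nlinarith [normSq_one_sub_conj_mul_sub_normSq_sub a w]

theorem hasDerivAt_blaschke_comp {g : ℂ → ℂ} {a c z : ℂ} (hg : HasDerivAt g c z)
    (hz : 1 - conj a * g z ≠ 0) :
    HasDerivAt (fun w => blaschke a (g w)) (c * (1 - conj a * a) / (1 - conj a * g z) ^ 2) z := by
  refine ((hg.sub_const a).div ((hg.const_mul (conj a)).const_sub 1) hz).congr_deriv ?_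
  ring

theorem normSq_one_sub_le_of_mapsTo_ball {g : ℂ → ℂ} {c : ℂ}
    (hd : DifferentiableOn ℂ g (ball 0 1)) (hmaps : MapsTo g (ball 0 1) (ball 0 1))
    (hg : HasDerivAt g c 1) (hg₁ : g 1 = 1) :
    normSq (1 - g 0) ≤ (1 - normSq (g 0)) * c.re := by
  set a := g 0
  have ha : ‖a‖ < 1 := mem_ball_zero_iff.1 (hmaps (mem_ball_self one_pos))
  have hden : ∀ w ∈ ball (0 : ℂ) 1, 1 - conj a * g w ≠ 0 := fun w hw ↦
    one_sub_conj_mul_ne_zero ha (mem_ball_zero_iff.1 (hmaps hw)).le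
  have hden₁ : 1 - conj a * g 1 ≠ 0 := one_sub_conj_mul_ne_zero ha (by simp [hg₁])
  have h1a : 1 - a ≠ 0 := by
    rw [sub_ne_zero]; intro h; simp [← h] at ha
  have h1a' : 1 - conj a ≠ 0 := by
    rwa [← map_one (starRingEnd ℂ), ← map_sub, map_ne_zero]
  have hschwarz := one_le_re_conj_mul_of_mapsTo_ball (φ := fun w => blaschke a (g w))
    (fun w hw ↦ ((hd w hw).sub_const a).div ((hd w hw).const_mul _ |>.const_sub 1) (hden w hw))
    (fun w hw ↦ mem_ball_zero_iff.2 (norm_blaschke_lt_one ha (mem_ball_zero_iff.1 (hmaps hw))))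
    (by simp [blaschke, a]) ?_ (hasDerivAt_blaschke_comp hg hden₁)
  · have key : conj (blaschke a (g 1)) * (c * (1 - conj a * a) / (1 - conj a * g 1) ^ 2)
        = c * ((1 - normSq a) / normSq (1 - a) : ℝ) := by
      rw [hg₁, blaschke, map_div₀, ofReal_div, ofReal_sub, ofReal_one, normSq_eq_conj_mul_self,
        normSq_eq_conj_mul_self]
      simp only [mul_one, map_sub, map_one, conj_conj]
      field_simp
    rw [key, re_mul_ofReal, mul_div_assoc', le_div_iff₀ (normSq_pos.2 h1a)] at hschwarz
    linarith
  · rw [hg₁, blaschke, norm_div, mul_one, ← norm_conj (1 - a), map_sub, map_one]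
    exact div_self (norm_ne_zero_iff.2 h1a')

theorem boundary_schwarz_at_one {g : ℂ → ℂ} {c : ℂ}
    (hd : DifferentiableOn ℂ g (ball 0 1)) (hmaps : MapsTo g (ball 0 1) (ball 0 1))
    (hcont : ∀ᶠ z in 𝓝 1, ContinuousAt g z) (hg : HasDerivAt g c 1) (hg₁ : g 1 = 1) :
    ∃ r : ℝ, (r : ℂ) = c ∧ ‖1 - g 0‖ ^ 2 / (1 - ‖g 0‖ ^ 2) ≤ r ∧
      0 < ‖1 - g 0‖ ^ 2 / (1 - ‖g 0‖ ^ 2) := by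
  have ha : ‖g 0‖ < 1 := mem_ball_zero_iff.1 (hmaps (mem_ball_self one_pos))
  have h1a : 0 < ‖1 - g 0‖ := by
    rw [norm_pos_iff, sub_ne_zero]; intro h; simp [← h] at ha
  have hden : 0 < 1 - ‖g 0‖ ^ 2 := by nlinarith [norm_nonneg (g 0)]
  refine ⟨c.re, ext rfl (im_eq_zero_of_hasDerivAt_of_mapsTo_ball hmaps hcont hg hg₁).symm, ?_,
    div_pos (pow_pos h1a 2) hden⟩
  rw [div_le_iff₀ hden, ← normSq_eq_norm_sq, ← normSq_eq_norm_sq, mul_comm]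
  exact normSq_one_sub_le_of_mapsTo_ball hd hmaps hg hg₁

-- With `u = ω z₁`, `v = ω z₂` this is the estimate `‖toDisc ω (z₁ + z₂, z₁ z₂)‖ < 1`.
theorem normSq_two_sub_add_sub_normSq (u v : ℂ) :
    normSq (2 - (u + v)) - normSq (u + v - 2 * (u * v))
      = 2 * ((1 - normSq u) * normSq (1 - v) + (1 - normSq v) * normSq (1 - u)) := by
  simp only [normSq_apply, sub_re, sub_im, add_re, add_im, mul_re, mul_im, one_re, one_im,
    re_ofNat, im_ofNat]
  ring

theorem norm_add_sub_two_mul_lt {u v : ℂ} (hu : ‖u‖ < 1) (hv : ‖v‖ < 1) :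
    ‖u + v - 2 * (u * v)‖ < ‖2 - (u + v)‖ := by
  have normSq_lt_one {w : ℂ} (hw : ‖w‖ < 1) : normSq w < 1 := by
    rw [normSq_eq_norm_sq]; nlinarith [norm_nonneg w]
  have one_sub_pos {w : ℂ} (hw : ‖w‖ < 1) : 0 < normSq (1 - w) := by
    rw [normSq_pos, sub_ne_zero]; rintro rfl; simp at hw
  rw [← sq_lt_sq₀ (norm_nonneg _) (norm_nonneg _), ← normSq_eq_norm_sq, ← normSq_eq_norm_sq]
  nlinarith [normSq_two_sub_add_sub_normSq u v,
    mul_pos (sub_pos.2 (normSq_lt_one hu)) (one_sub_pos hv),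
    mul_pos (sub_pos.2 (normSq_lt_one hv)) (one_sub_pos hu)]

theorem HasFDerivAt.comp_smul_const {𝕜 E F : Type*} [NontriviallyNormedField 𝕜]
    [NormedAddCommGroup E] [NormedSpace 𝕜 E] [NormedAddCommGroup F] [NormedSpace 𝕜 F]
    {φ : E → F} {φ' : E →L[𝕜] F} {v : E} (h : HasFDerivAt φ φ' v) :
    HasDerivAt (fun ξ : 𝕜 => φ (ξ • v)) (φ' v) 1 := by
  have hline : HasDerivAt (fun ξ : 𝕜 => ξ • v) v 1 := by
    simpa using (hasDerivAt_id (1 : 𝕜)).smul_const v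
  exact (show HasFDerivAt φ φ' ((1 : 𝕜) • v) by rwa [one_smul]).comp_hasDerivAt 1 hline

namespace G2

/-- `-ω Φ(ω, s, p)` for the Agler–Young function `Φ(z, s, p) = (2zp - s) / (2 - zs)`. -/
noncomputable def toDisc (ω : ℂ) (x : ℂ × ℂ) : ℂ :=
  (ω * x.1 - 2 * ω ^ 2 * x.2) / (2 - ω * x.1)

variable {ω : ℂ}

theorem norm_mul_fst_sub_lt (hω : ‖ω‖ = 1) {x : ℂ × ℂ} (hx : x ∈ G2) :
    ‖ω * x.1 - 2 * ω ^ 2 * x.2‖ < ‖2 - ω * x.1‖ := by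
  obtain ⟨z₁, z₂, h₁, h₂, rfl⟩ := hx
  have key := norm_add_sub_two_mul_lt (u := ω * z₁) (v := ω * z₂) (by simpa [hω]) (by simpa [hω])
  convert key using 2 <;> ring

theorem two_sub_mul_fst_ne_zero (hω : ‖ω‖ = 1) {x : ℂ × ℂ} (hx : x ∈ G2) : 2 - ω * x.1 ≠ 0 :=
  norm_pos_iff.1 ((norm_nonneg _).trans_lt (norm_mul_fst_sub_lt hω hx))

theorem norm_toDisc_lt_one (hω : ‖ω‖ = 1) {x : ℂ × ℂ} (hx : x ∈ G2) : ‖toDisc ω x‖ < 1 := by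
  rw [toDisc, norm_div, div_lt_one (norm_pos_iff.2 (two_sub_mul_fst_ne_zero hω hx))]
  exact norm_mul_fst_sub_lt hω hx

theorem differentiableAt_toDisc {x : ℂ × ℂ} (hx : 2 - ω * x.1 ≠ 0) :
    DifferentiableAt ℂ (toDisc ω) x := by
  unfold toDisc
  fun_prop (disch := exact hx)

theorem toDisc_inv_zero (hω : ω ≠ 0) : toDisc ω (ω⁻¹, 0) = 1 := by
  simp [toDisc, hω]
  norm_num

theorem mk_zero_mem {z : ℂ} (hz : ‖z‖ < 1) : (z, 0) ∈ G2 :=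
  ⟨z, 0, hz, by simp, by simp⟩

theorem hasDerivAt_toDisc_comp {h₁ h₂ : ℂ → ℂ} {d₁ d₂ z : ℂ} (hω : ω ≠ 0)
    (hh₁ : HasDerivAt h₁ d₁ z) (hh₂ : HasDerivAt h₂ d₂ z) (hz₁ : h₁ z = ω⁻¹) (hz₂ : h₂ z = 0) :
    HasDerivAt (fun ξ => toDisc ω (h₁ ξ, h₂ ξ)) (2 * ω * (d₁ - ω * d₂)) z := by
  have hden : 2 - ω * h₁ z ≠ 0 := by simp [hz₁, hω]; norm_num
  refine (((hh₁.const_mul ω).sub (hh₂.const_mul (2 * ω ^ 2))).div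
    ((hh₁.const_mul ω).const_sub 2) hden).congr_deriv ?_
  simp only [Pi.sub_apply, hz₁, hz₂, mul_inv_cancel₀ hω]
  ring

theorem smul_mk_inv_zero_mem (hω : ‖ω‖ = 1) {ξ : ℂ} (hξ : ξ ∈ ball (0 : ℂ) 1) :
    ξ • ((ω⁻¹, 0) : ℂ × ℂ) ∈ G2 := by
  simpa using mk_zero_mem (z := ξ * ω⁻¹) (by simpa [hω] using hξ)

variable {f : ℂ × ℂ → ℂ × ℂ}

theorem differentiableOn_toDisc_comp_line (hω : ‖ω‖ = 1) (hd : DifferentiableOn ℂ f G2)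
    (hmaps : MapsTo f G2 G2) :
    DifferentiableOn ℂ (fun ξ : ℂ => toDisc ω (f (ξ • (ω⁻¹, 0)))) (ball 0 1) := fun ξ hξ ↦
  (differentiableAt_toDisc (two_sub_mul_fst_ne_zero hω (hmaps (smul_mk_inv_zero_mem hω hξ))))
    |>.comp_differentiableWithinAt ξ <|
    (hd _ (smul_mk_inv_zero_mem hω hξ)).comp ξ
      (differentiableAt_id.smul_const _).differentiableWithinAt fun _ ↦ smul_mk_inv_zero_mem hω

theorem mapsTo_toDisc_comp_line (hω : ‖ω‖ = 1) (hmaps : MapsTo f G2 G2) :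
    MapsTo (fun ξ : ℂ => toDisc ω (f (ξ • (ω⁻¹, 0)))) (ball 0 1) (ball 0 1) := fun _ hξ ↦
  mem_ball_zero_iff.2 (norm_toDisc_lt_one hω (hmaps (smul_mk_inv_zero_mem hω hξ)))

theorem eventually_differentiableAt_toDisc_comp_line (hω : ω ≠ 0)
    (hext : ∀ᶠ w in 𝓝 ((ω⁻¹, 0) : ℂ × ℂ), DifferentiableAt ℂ f w)
    (hfix : f (ω⁻¹, 0) = (ω⁻¹, 0)) :
    ∀ᶠ ξ in 𝓝 (1 : ℂ), DifferentiableAt ℂ (fun ξ : ℂ => toDisc ω (f (ξ • (ω⁻¹, 0)))) ξ := by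
  have hline : Tendsto (fun ξ : ℂ => ξ • ((ω⁻¹, 0) : ℂ × ℂ)) (𝓝 1) (𝓝 (ω⁻¹, 0)) :=
    (continuous_id.smul continuous_const).tendsto' 1 _ (by simp)
  have hcont : ContinuousAt f (ω⁻¹, 0) := hext.self_of_nhds.continuousAt
  have hden : ∀ᶠ w in 𝓝 ((ω⁻¹, 0) : ℂ × ℂ), 2 - ω * (f w).1 ≠ 0 :=
    (continuousAt_const.sub (continuousAt_const.mul hcont.fst)).eventually_ne
      (by simp [hfix, hω]; norm_num)
  filter_upwards [hline.eventually (hext.and hden)] with ξ ⟨hfξ, hdenξ⟩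
  exact (differentiableAt_toDisc hdenξ).comp ξ (hfξ.comp ξ (differentiableAt_id.smul_const _))

theorem hasDerivAt_toDisc_comp_line (hω : ω ≠ 0) (hf : DifferentiableAt ℂ f (ω⁻¹, 0))
    (hfix : f (ω⁻¹, 0) = (ω⁻¹, 0)) :
    HasDerivAt (fun ξ : ℂ => toDisc ω (f (ξ • (ω⁻¹, 0))))
      (2 * (fderiv ℂ (fun w => (f w).1) (ω⁻¹, 0) (1, 0)
        - ω * fderiv ℂ (fun w => (f w).2) (ω⁻¹, 0) (1, 0))) 1 := by
  have hcomp {φ : ℂ × ℂ → ℂ} (hφ : DifferentiableAt ℂ φ (ω⁻¹, 0)) :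
      HasDerivAt (fun ξ : ℂ => φ (ξ • (ω⁻¹, 0))) (ω⁻¹ * fderiv ℂ φ (ω⁻¹, 0) (1, 0)) 1 := by
    have h := hφ.hasFDerivAt.comp_smul_const (𝕜 := ℂ)
    rwa [show ((ω⁻¹, 0) : ℂ × ℂ) = ω⁻¹ • ((1 : ℂ), (0 : ℂ)) by simp, map_smul, smul_eq_mul,
      ← show ((ω⁻¹, 0) : ℂ × ℂ) = ω⁻¹ • ((1 : ℂ), (0 : ℂ)) by simp] at h
  refine (hasDerivAt_toDisc_comp hω (hcomp hf.fst) (hcomp hf.snd) (by simp [hfix])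
    (by simp [hfix])).congr_deriv ?_
  field_simp

end G2

theorem stmt_14_general (θ : ℝ)
    (f : ℂ × ℂ → ℂ × ℂ)
    (hd : DifferentiableOn ℂ f G2) (hmaps : Set.MapsTo f G2 G2)
    (z₀ : ℂ × ℂ) (hz₀ : z₀ = (Complex.exp (θ * Complex.I), 0))
    (hext : ∀ᶠ w in nhds z₀, DifferentiableAt ℂ f w)
    (hfix : f z₀ = z₀)
    (g0 : ℂ)
    (hg0 : g0 = Complex.exp (-2 * θ * Complex.I) *
        (Complex.exp (θ * Complex.I) * (f (0, 0)).1 - 2 * (f (0, 0)).2) /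
          (2 - Complex.exp (-θ * Complex.I) * (f (0, 0)).1)) :
    ∃ lam : ℝ,
      (lam : ℂ) =
          fderiv ℂ (fun w => (f w).1) z₀ (1, 0)
            - Complex.exp (-θ * Complex.I) * fderiv ℂ (fun w => (f w).2) z₀ (1, 0) ∧
      (1 / 2) * ‖1 - conj g0‖ ^ 2 / (1 - ‖g0‖ ^ 2) ≤ lam ∧
      0 < (1 / 2) * ‖1 - conj g0‖ ^ 2 / (1 - ‖g0‖ ^ 2) := by
  set ω := exp (-θ * I) with hω_def
  have hω : ‖ω‖ = 1 := by simp [ω, norm_exp]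
  have hω₀ : ω ≠ 0 := exp_ne_zero _
  have he : exp (θ * I) = ω⁻¹ := by rw [hω_def, neg_mul, exp_neg, inv_inv]
  rw [he] at hz₀ hg0
  subst hz₀
  set g := fun ξ : ℂ => G2.toDisc ω (f (ξ • (ω⁻¹, 0)))
  have hg₀ : g 0 = g0 := by
    rw [hg0, show exp (-2 * θ * I) = ω ^ 2 by rw [hω_def, ← exp_nat_mul]; ring_nf]
    simp only [g, zero_smul, G2.toDisc, Prod.mk_zero_zero]
    field_simp
  have hg₁ : g 1 = 1 := by simp [g, hfix, G2.toDisc_inv_zero hω₀]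
  obtain ⟨r, hr, hle, hpos⟩ := boundary_schwarz_at_one (g := g)
    (G2.differentiableOn_toDisc_comp_line hω hd hmaps) (G2.mapsTo_toDisc_comp_line hω hmaps)
    ((G2.eventually_differentiableAt_toDisc_comp_line hω₀ hext hfix).mono
      fun _ h ↦ h.continuousAt)
    (G2.hasDerivAt_toDisc_comp_line hω₀ hext.self_of_nhds hfix) hg₁
  rw [hg₀] at hle hpos
  have hconj : ‖1 - conj g0‖ = ‖1 - g0‖ := by rw [← norm_conj, map_sub, map_one, conj_conj]
  refine ⟨r / 2, ?_, ?_, ?_⟩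
  · push_cast; rw [hr]; ring
  · rw [hconj, mul_div_assoc]; linarith
  · rw [hconj, mul_div_assoc]; linarith

theorem stmt_14 (θ : ℝ) (hθ : θ ∈ Set.Ico 0 (2 * Real.pi))
    (f : ℂ × ℂ → ℂ × ℂ)
    (hd : DifferentiableOn ℂ f G2) (hmaps : Set.MapsTo f G2 G2)
    (z₀ : ℂ × ℂ) (hz₀ : z₀ = (Complex.exp (θ * Complex.I), 0))
    (hext : ∀ᶠ w in nhds z₀, DifferentiableAt ℂ f w)
    (hfix : f z₀ = z₀)
    (g0 : ℂ)
    (hg0 : g0 = Complex.exp (-2 * θ * Complex.I) *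
        (Complex.exp (θ * Complex.I) * (f (0, 0)).1 - 2 * (f (0, 0)).2) /
          (2 - Complex.exp (-θ * Complex.I) * (f (0, 0)).1)) :
    ∃ lam : ℝ,
      (lam : ℂ) =
          fderiv ℂ (fun w => (f w).1) z₀ (1, 0)
            - Complex.exp (-θ * Complex.I) * fderiv ℂ (fun w => (f w).2) z₀ (1, 0) ∧
      (1 / 2) * ‖1 - conj g0‖ ^ 2 / (1 - ‖g0‖ ^ 2) ≤ lam ∧
      0 < (1 / 2) * ‖1 - conj g0‖ ^ 2 / (1 - ‖g0‖ ^ 2) :=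
  stmt_14_general θ f hd hmaps z₀ hz₀ hext hfix g0 hg0
end
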